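/- Let g ∈ F_{q^t}[X; θ] be invariant of degree ρ, written g = ∑_u g_u X^u, and let s ∈ F_{q^t}^* with right gcd (X − s, g)_r = 1. Write g = q(X)(X − s) + r with q = ∑_{i=0}^{ρ−1} q_i X^i and r ∈ F_{q^t}. Then r = g(s) = ∑_{i=0}^{ρ} g_i N_i(s) ≠ 0 and for each 0 ≤ i ≤ ρ − 1, q_i = ∑_{b=0}^{⌊(ρ−i−1)/t⌋} g_{ρ−bt} · N_{ρ−bt}(s)/N_{i+1}(s). -/
import Mathlib


open Polynomial Finset

/-- Multiplication in the skew polynomial ring `F[X;θ]` (with `X·a = θ(a)·X`). -/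
noncomputable def skewMul {F : Type} [Field F] (θ : F ≃+* F) (f g : Polynomial F) :
    Polynomial F :=
  f.sum fun i a => Polynomial.C a * g.map ((θ ^ i : F ≃+* F) : F →+* F) * Polynomial.X ^ i

section Helpers

variable {F : Type} [Field F] (θ : F ≃+* F)

lemma skewMul_zero_left (g : Polynomial F) : skewMul θ 0 g = 0 := by
  simp [skewMul]

lemma coeff_skewMul (f g : Polynomial F) (n : ℕ) :
    (skewMul θ f g).coeff n = ∑ i ∈ range (n+1), f.coeff i * (θ ^ i) (g.coeff (n - i)) := by
  unfold skewMul
  rw [Polynomial.sum, Polynomial.finset_sum_coeff]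
  have hterm : ∀ i, (Polynomial.C (f.coeff i) * g.map ((θ^i : F ≃+* F) : F →+* F)
      * Polynomial.X ^ i).coeff n = if i ≤ n then f.coeff i * (θ^i) (g.coeff (n-i)) else 0 := by
    intro i
    rw [coeff_mul_X_pow', coeff_C_mul, coeff_map]
    rfl
  simp only [hterm]
  have h1 : ∑ x ∈ f.support, (if x ≤ n then f.coeff x * (θ ^ x) (g.coeff (n - x)) else 0)
      = ∑ x ∈ f.support ∪ range (n+1),
        (if x ≤ n then f.coeff x * (θ ^ x) (g.coeff (n - x)) else 0) := by
    apply Finset.sum_subset Finset.subset_union_left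
    intro x _ hx
    have : f.coeff x = 0 := Polynomial.notMem_support_iff.mp hx
    simp [this]
  have h2 : ∑ x ∈ range (n+1), (if x ≤ n then f.coeff x * (θ ^ x) (g.coeff (n - x)) else 0)
      = ∑ x ∈ f.support ∪ range (n+1),
        (if x ≤ n then f.coeff x * (θ ^ x) (g.coeff (n - x)) else 0) := by
    apply Finset.sum_subset Finset.subset_union_right
    intro x _ hx
    rw [Finset.mem_range] at hx
    rw [if_neg (by omega)]
  rw [h1, ← h2]
  apply Finset.sum_congr rfl
  intro x hx
  rw [Finset.mem_range] at hx
  rw [if_pos (by omega)]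

lemma coeff_skewMul_C_right (g : Polynomial F) (a : F) (n : ℕ) :
    (skewMul θ g (Polynomial.C a)).coeff n = g.coeff n * (θ ^ n) a := by
  rw [coeff_skewMul]
  rw [Finset.sum_eq_single n]
  · simp
  · intro i hi hne
    rw [Finset.mem_range] at hi
    rw [Polynomial.coeff_C, if_neg (by omega)]
    simp
  · intro h
    exact absurd (Finset.self_mem_range_succ n) h

lemma coeff_skewMul_C_left (b : F) (g : Polynomial F) (n : ℕ) :
    (skewMul θ (Polynomial.C b) g).coeff n = b * g.coeff n := by
  rw [coeff_skewMul]
  rw [Finset.sum_eq_single 0]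
  · simp [show ∀ x : F, (1 : F ≃+* F) x = x from fun _ => rfl, mul_comm]
  · intro i hi hne
    rw [Polynomial.coeff_C, if_neg hne]
    simp
  · intro h
    simp at h

lemma coeff_skewMul_linear (q : Polynomial F) (s : F) (n : ℕ) :
    (skewMul θ q (Polynomial.X - Polynomial.C s)).coeff n
      = (if n = 0 then 0 else q.coeff (n-1)) - (θ ^ n) s * q.coeff n := by
  rw [coeff_skewMul]
  have hco : ∀ k, (Polynomial.X - Polynomial.C s).coeff k
      = (if k = 1 then 1 else 0) - (if k = 0 then s else 0) := by
    intro k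
    rw [Polynomial.coeff_sub, Polynomial.coeff_X, Polynomial.coeff_C]
    congr 1
    split_ifs with h1 h2 <;> simp_all
  match n with
  | 0 =>
    simp only [Finset.range_one, Finset.sum_singleton, hco]
    simp [show ∀ x : F, (1 : F ≃+* F) x = x from fun _ => rfl, mul_comm]
  | Nat.succ m =>
    rw [Finset.sum_range_succ]
    have hlast : q.coeff (m+1) * (θ ^ (m+1)) ((Polynomial.X - Polynomial.C s).coeff (m+1-(m+1)))
        = -((θ ^ (m+1)) s * q.coeff (m+1)) := by
      rw [Nat.sub_self, hco]
      simp [mul_comm]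
    rw [hlast]
    have hrest : ∑ i ∈ Finset.range (m+1),
        q.coeff i * (θ ^ i) ((Polynomial.X - Polynomial.C s).coeff (m+1-i)) = q.coeff m := by
      rw [Finset.sum_eq_single m]
      · have : m + 1 - m = 1 := by omega
        rw [this, hco]
        simp
      · intro i hi hne
        rw [Finset.mem_range] at hi
        rw [hco, if_neg (by omega), if_neg (by omega)]
        simp
      · intro h
        exact absurd (Finset.self_mem_range_succ m) h
    rw [hrest]
    simp only [if_neg (Nat.succ_ne_zero m), Nat.succ_sub_one]
    ring

lemma theta_pow_apply (qc : ℕ) (hθ : ∀ x : F, θ x = x ^ qc) :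
    ∀ (m : ℕ) (x : F), (θ ^ m) x = x ^ (qc ^ m) := by
  intro m
  induction m with
  | zero => intro x; simp
  | succ n ih =>
    intro x
    have h : (θ ^ (n+1)) x = (θ ^ n) (θ x) := by rw [pow_succ]; rfl
    rw [h, hθ, ih, ← pow_mul, pow_succ, mul_comm]

lemma theta_pow_comp (m k : ℕ) (x : F) : (θ ^ m) ((θ ^ k) x) = (θ ^ (m + k)) x := by
  rw [pow_add]; rfl

lemma support_mod {F : Type} [Field F] [Fintype F] (qc t ρ : ℕ)
    (hF : Fintype.card F = qc ^ t) (θ : F ≃+* F) (hθ : ∀ x : F, θ x = x ^ qc)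
    (g : Polynomial F) (hg : g ≠ 0) (hρ : g.natDegree = ρ)
    (hinv : {x | ∃ f, x = skewMul θ g f} = {x | ∃ f, x = skewMul θ f g}) :
    ∀ u, g.coeff u ≠ 0 → t ∣ (ρ - u) := by
  intro u hgu
  have hpow := theta_pow_apply θ qc hθ
  have hcard : 1 < qc ^ t := hF ▸ Fintype.one_lt_card
  have ht : 0 < t := by
    rcases Nat.eq_zero_or_pos t with h | h
    · subst h; simp at hcard
    · exact h
  have hqc : 1 < qc := by
    by_contra h
    push_neg at h
    have := Nat.pow_le_pow_left h t
    simp at this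
    omega
  have hgρ : g.coeff ρ ≠ 0 := by
    rw [← hρ]
    exact mt Polynomial.leadingCoeff_eq_zero.mp hg
  have hu : u ≤ ρ := hρ ▸ Polynomial.le_natDegree_of_ne_zero hgu
  have key : ∀ a : F, (θ ^ u) a = (θ ^ ρ) a := by
    intro a
    by_cases ha : a = 0
    · simp [ha]
    have hmem : skewMul θ g (Polynomial.C a) ∈ {x | ∃ f, x = skewMul θ f g} := by
      rw [← hinv]; exact ⟨Polynomial.C a, rfl⟩
    obtain ⟨f, hf⟩ := hmem
    have hfne : f ≠ 0 := by
      rintro rfl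
      rw [skewMul_zero_left] at hf
      have h0 := congrArg (fun p => Polynomial.coeff p ρ) hf
      simp only [coeff_skewMul_C_right, Polynomial.coeff_zero] at h0
      rcases mul_eq_zero.mp h0 with h | h
      · exact hgρ h
      · exact ha ((θ ^ ρ).injective (h.trans (map_zero _).symm))
    have hfd : f.coeff f.natDegree ≠ 0 := mt Polynomial.leadingCoeff_eq_zero.mp hfne
    have hd : f.natDegree = 0 := by
      by_contra hd0
      have h1 : (skewMul θ f g).coeff (f.natDegree + ρ)
          = f.coeff f.natDegree * (θ ^ f.natDegree) (g.coeff ρ) := by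
        rw [coeff_skewMul, Finset.sum_eq_single f.natDegree]
        · have h0 : f.natDegree + ρ - f.natDegree = ρ := by omega
          rw [h0]
        · intro i hi hne
          rcases lt_or_gt_of_ne hne with h | h
          · have h2 : g.natDegree < f.natDegree + ρ - i := by omega
            rw [Polynomial.coeff_eq_zero_of_natDegree_lt h2]
            simp
          · rw [Polynomial.coeff_eq_zero_of_natDegree_lt (show f.natDegree < i from h)]
            simp
        · intro h
          exact absurd (Finset.mem_range.mpr (by omega)) h
      have h2 : (skewMul θ g (Polynomial.C a)).coeff (f.natDegree + ρ) = 0 := by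
        rw [coeff_skewMul_C_right]
        rw [Polynomial.coeff_eq_zero_of_natDegree_lt (show g.natDegree < f.natDegree + ρ by omega)]
        simp
      rw [hf, h1] at h2
      rcases mul_eq_zero.mp h2 with h | h
      · exact hfd h
      · exact hgρ ((θ ^ f.natDegree).injective (h.trans (map_zero _).symm))
    have hb := Polynomial.eq_C_of_natDegree_eq_zero hd
    rw [hb] at hf
    have hcoeffs : ∀ n, g.coeff n * (θ ^ n) a = f.coeff 0 * g.coeff n := by
      intro n
      have h3 := congrArg (fun p => Polynomial.coeff p n) hf
      simpa only [coeff_skewMul_C_right, coeff_skewMul_C_left] using h3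
    have e1 : (θ ^ ρ) a = f.coeff 0 := by
      have h4 := hcoeffs ρ
      rw [mul_comm (f.coeff 0)] at h4
      exact mul_left_cancel₀ hgρ h4
    have e2 : (θ ^ u) a = f.coeff 0 := by
      have h4 := hcoeffs u
      rw [mul_comm (f.coeff 0)] at h4
      exact mul_left_cancel₀ hgu h4
    rw [e1, e2]
  have hFix : ∀ a : F, (θ ^ (ρ - u)) a = a := by
    intro a
    have h1 : (θ ^ u) ((θ ^ (ρ - u)) a) = (θ ^ u) a := by
      rw [theta_pow_comp, show u + (ρ - u) = ρ by omega, ← key a]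
    exact (θ ^ u).injective h1
  have hθt : ∀ x : F, (θ ^ t) x = x := by
    intro x
    rw [hpow, ← hF]
    exact FiniteField.pow_card x
  have hid : ∀ k (a : F), (θ ^ (t * k)) a = a := by
    intro k
    induction k with
    | zero => intro a; simp
    | succ n ih =>
      intro a
      have h : t * (n + 1) = t * n + t := by ring
      rw [h, ← theta_pow_comp, hθt a]
      exact ih a
  have hbfix : ∀ a : F, (θ ^ ((ρ - u) % t)) a = a := by
    intro a
    have h1 : (θ ^ (t * ((ρ - u) / t))) ((θ ^ ((ρ - u) % t)) a) = (θ ^ (ρ - u)) a := by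
      rw [theta_pow_comp]
      have h0 : t * ((ρ - u) / t) + (ρ - u) % t = ρ - u := Nat.div_add_mod _ t
      rw [h0]
    rw [hid] at h1
    rw [h1, hFix]
  by_contra hndvd
  have hb0 : (ρ - u) % t ≠ 0 := fun h => hndvd (Nat.dvd_of_mod_eq_zero h)
  have he2 : 2 ≤ qc ^ ((ρ - u) % t) := Nat.one_lt_pow hb0 hqc
  have heval : ∀ x : F,
      (Polynomial.X ^ (qc ^ ((ρ - u) % t)) - Polynomial.X : Polynomial F).eval x = 0 := by
    intro x
    have h := hbfix x
    rw [hpow] at h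
    simp [h]
  have hdeg : (Polynomial.X ^ (qc ^ ((ρ - u) % t)) - Polynomial.X : Polynomial F).natDegree
      < Fintype.card F := by
    have h1 : (Polynomial.X ^ (qc ^ ((ρ - u) % t)) - Polynomial.X : Polynomial F).natDegree
        ≤ qc ^ ((ρ - u) % t) := by
      refine le_trans (Polynomial.natDegree_sub_le _ _) ?_
      rw [Polynomial.natDegree_X_pow, Polynomial.natDegree_X]
      omega
    have h2 : qc ^ ((ρ - u) % t) < qc ^ t :=
      Nat.pow_lt_pow_right hqc (Nat.mod_lt _ ht)
    rw [hF]
    omega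
  have hzero := Polynomial.eq_zero_of_natDegree_lt_card_of_eval_eq_zero
    (Polynomial.X ^ (qc ^ ((ρ - u) % t)) - Polynomial.X : Polynomial F) Function.injective_id
    (fun x => heval x) hdeg
  have hc := congrArg (fun p => Polynomial.coeff p (qc ^ ((ρ - u) % t))) hzero
  simp only [Polynomial.coeff_sub, Polynomial.coeff_X_pow, if_pos rfl,
    Polynomial.coeff_zero, Polynomial.coeff_X] at hc
  rw [if_neg (show ¬(1 = qc ^ ((ρ - u) % t)) by omega)] at hc
  simp at hc

end Helpers

/-- Let `g ∈ F_{q^t}[X;θ]` be invariant of degree `ρ` and `s ∈ F_{q^t}^*`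
with `(X − s, g)_r = 1` (equivalently `X − s` does not right-divide `g`). Writing
`g = q(X)(X − s) + r` with `r ∈ F_{q^t}` constant, one has
`r = g(s) = ∑_{i=0}^{ρ} g_i N_i(s) ≠ 0`, and for each `0 ≤ i ≤ ρ − 1`,
`q_i = ∑_{b=0}^{⌊(ρ−i−1)/t⌋} g_{ρ−bt} · N_{ρ−bt}(s) / N_{i+1}(s)`, where
`N_i(s) = ∏_{u=0}^{i-1} θ^u(s)` are the partial norms. -/
theorem skew_quotient_coeffs (qc t ρ : ℕ) (F : Type) [Field F] [Fintype F]
    (hF : Fintype.card F = qc ^ t) (θ : F ≃+* F) (hθ : ∀ x : F, θ x = x ^ qc)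
    (g : Polynomial F) (hg : g ≠ 0) (hρ : g.natDegree = ρ)
    (hinv : {x | ∃ f, x = skewMul θ g f} = {x | ∃ f, x = skewMul θ f g})
    (s : F) (hs : s ≠ 0)
    (hcop : ¬ ∃ h, g = skewMul θ h (Polynomial.X - Polynomial.C s))
    (q : Polynomial F) (r : F)
    (hdiv : g = skewMul θ q (Polynomial.X - Polynomial.C s) + Polynomial.C r) :
    r = (∑ i ∈ range (ρ + 1), g.coeff i * ∏ u ∈ range i, (θ ^ u) s) ∧ r ≠ 0 ∧
    ∀ i < ρ, q.coeff i =
      ∑ b ∈ range ((ρ - i - 1) / t + 1),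
        g.coeff (ρ - b * t) *
          ((∏ u ∈ range (ρ - b * t), (θ ^ u) s) / ∏ u ∈ range (i + 1), (θ ^ u) s) := by
  have hmod := support_mod qc t ρ hF θ hθ g hg hρ hinv
  have hcard : 1 < qc ^ t := hF ▸ Fintype.one_lt_card
  have ht : 0 < t := by
    rcases Nat.eq_zero_or_pos t with h | h
    · subst h; simp at hcard
    · exact h
  -- partial norms are nonzero
  have hNne : ∀ i : ℕ, (∏ u ∈ range i, (θ ^ u) s) ≠ 0 := by
    intro i
    apply Finset.prod_ne_zero_iff.mpr
    intro u _
    intro h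
    exact hs ((θ ^ u).injective (h.trans (map_zero _).symm))
  have hNsucc : ∀ i : ℕ, (∏ u ∈ range (i+1), (θ ^ u) s)
      = (∏ u ∈ range i, (θ ^ u) s) * (θ ^ i) s := fun i => Finset.prod_range_succ _ i
  -- coefficient relations from hdiv
  have hc : ∀ n, g.coeff n
      = (if n = 0 then 0 else q.coeff (n-1)) - (θ ^ n) s * q.coeff n
        + (if n = 0 then r else 0) := by
    intro n
    conv_lhs => rw [hdiv]
    rw [Polynomial.coeff_add, coeff_skewMul_linear, Polynomial.coeff_C]
  have hqtop : ∀ j, ρ ≤ j → q.coeff j = 0 := by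
    intro j hj
    by_cases hq0 : q = 0
    · simp [hq0]
    have hlt : q.natDegree < ρ := by
      by_contra hge
      push_neg at hge
      have h1 := hc (q.natDegree + 1)
      rw [if_neg (Nat.succ_ne_zero _), if_neg (Nat.succ_ne_zero _), Nat.add_sub_cancel] at h1
      rw [Polynomial.coeff_eq_zero_of_natDegree_lt (show g.natDegree < q.natDegree + 1 by omega)] at h1
      rw [Polynomial.coeff_eq_zero_of_natDegree_lt (show q.natDegree < q.natDegree + 1 by omega)] at h1
      have h2 : q.coeff q.natDegree = 0 := by
        have := h1
        ring_nf at this ⊢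
        linear_combination -this
      exact (mt Polynomial.leadingCoeff_eq_zero.mp hq0) h2
    exact Polynomial.coeff_eq_zero_of_natDegree_lt (by omega)
  have hrec : ∀ j, q.coeff j = g.coeff (j+1) + (θ ^ (j+1)) s * q.coeff (j+1) := by
    intro j
    have h1 := hc (j+1)
    rw [if_neg (Nat.succ_ne_zero _), if_neg (Nat.succ_ne_zero _), Nat.add_sub_cancel] at h1
    linear_combination -h1
  -- main recurrence solution
  have hkeyAux : ∀ k i, ρ ≤ i + k →
      (∏ u ∈ range (i+1), (θ ^ u) s) * q.coeff i
        = ∑ j ∈ Finset.Ico (i+1) (ρ+1), g.coeff j * ∏ u ∈ range j, (θ ^ u) s := by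
    intro k
    induction k with
    | zero =>
      intro i hi
      rw [Finset.Ico_eq_empty (by omega), Finset.sum_empty, hqtop i (by omega), mul_zero]
    | succ n ih =>
      intro i hi
      by_cases hcase : ρ ≤ i
      · rw [Finset.Ico_eq_empty (by omega), Finset.sum_empty, hqtop i (by omega), mul_zero]
      push_neg at hcase
      have ih' := ih (i+1) (by omega)
      rw [hrec i, mul_add]
      have h2 : (∏ u ∈ range (i+1), (θ ^ u) s) * ((θ ^ (i+1)) s * q.coeff (i+1))
          = ∑ j ∈ Finset.Ico (i+2) (ρ+1), g.coeff j * ∏ u ∈ range j, (θ ^ u) s := by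
        rw [← ih', hNsucc (i+1)]
        ring
      rw [h2]
      rw [Finset.sum_eq_sum_Ico_succ_bot (show i+1 < ρ+1 by omega)]
      ring
  have hq : ∀ i, q.coeff i = ∑ j ∈ Finset.Ico (i+1) (ρ+1),
      g.coeff j * ((∏ u ∈ range j, (θ ^ u) s) / ∏ u ∈ range (i+1), (θ ^ u) s) := by
    intro i
    have h1 := hkeyAux ρ i (by omega)
    have h2 : q.coeff i = (∑ j ∈ Finset.Ico (i+1) (ρ+1), g.coeff j * ∏ u ∈ range j, (θ ^ u) s)
        / ∏ u ∈ range (i+1), (θ ^ u) s := by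
      rw [← h1, mul_comm, mul_div_assoc, div_self (hNne (i+1)), mul_one]
    rw [h2, Finset.sum_div]
    apply Finset.sum_congr rfl
    intro j _
    rw [mul_div_assoc]
  -- r formula
  have hr : r = ∑ i ∈ range (ρ + 1), g.coeff i * ∏ u ∈ range i, (θ ^ u) s := by
    have h0 := hc 0
    have hθ0 : (θ ^ 0) s = s := rfl
    rw [hθ0] at h0
    norm_num at h0
    have hN1 : (∏ u ∈ range 1, (θ ^ u) s) = s := by
      rw [Finset.prod_range_one]; rfl
    have hq0 : s * q.coeff 0 = ∑ j ∈ Finset.Ico 1 (ρ+1), g.coeff j * ∏ u ∈ range j, (θ ^ u) s := by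
      rw [hq 0, Finset.mul_sum]
      apply Finset.sum_congr rfl
      intro j _
      rw [hN1]
      field_simp
    have hsr : (range (ρ+1)) = Finset.Ico 0 (ρ+1) := by rw [Finset.range_eq_Ico]
    rw [hsr, Finset.sum_eq_sum_Ico_succ_bot (show 0 < ρ+1 by omega)]
    simp only [Finset.range_zero, Finset.prod_empty, mul_one]
    rw [← hq0]
    linear_combination -h0
  refine ⟨hr, ?_, ?_⟩
  · intro hr0
    apply hcop
    refine ⟨q, ?_⟩
    rw [hdiv, hr0, Polynomial.C_0, add_zero]
  · -- coefficient formula for q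
    intro i hi
    rw [hq i]
    have hmul : ∀ b, b < (ρ - i - 1) / t + 1 → b * t ≤ ρ - i - 1 := by
      intro b hb
      have hb' : b ≤ (ρ - i - 1) / t := by omega
      calc b * t ≤ ((ρ - i - 1) / t) * t := Nat.mul_le_mul_right t hb'
      _ ≤ ρ - i - 1 := Nat.div_mul_le_self _ _
    have hinj : Set.InjOn (fun b => ρ - b * t) (range ((ρ - i - 1) / t + 1)) := by
      intro b1 hb1 b2 hb2 heq
      simp only [Finset.coe_range, Set.mem_Iio] at hb1 hb2
      have h1 := hmul b1 hb1
      have h2 := hmul b2 hb2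
      simp only at heq
      have h3 : b1 * t = b2 * t := by omega
      exact Nat.eq_of_mul_eq_mul_right ht h3
    have himg : (range ((ρ - i - 1) / t + 1)).image (fun b => ρ - b * t)
        ⊆ Finset.Ico (i+1) (ρ+1) := by
      intro j hj
      obtain ⟨b, hb, rfl⟩ := Finset.mem_image.mp hj
      rw [Finset.mem_range] at hb
      have := hmul b hb
      rw [Finset.mem_Ico]
      omega
    have himage : ∑ j ∈ (range ((ρ - i - 1) / t + 1)).image (fun b => ρ - b * t),
          g.coeff j * ((∏ u ∈ range j, (θ ^ u) s) / ∏ u ∈ range (i + 1), (θ ^ u) s)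
        = ∑ b ∈ range ((ρ - i - 1) / t + 1), g.coeff (ρ - b * t) *
          ((∏ u ∈ range (ρ - b * t), (θ ^ u) s) / ∏ u ∈ range (i + 1), (θ ^ u) s) :=
      Finset.sum_image (fun x hx y hy h => hinj hx hy h)
    rw [← himage]
    symm
    apply Finset.sum_subset himg
    intro j hj hnot
    rw [Finset.mem_Ico] at hj
    by_cases hgj : g.coeff j = 0
    · rw [hgj, zero_mul]
    exfalso
    apply hnot
    have hdvd := hmod j hgj
    obtain ⟨b, hb⟩ := hdvd
    have hbj : b * t = ρ - j := by rw [Nat.mul_comm]; omega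
    rw [Finset.mem_image]
    refine ⟨b, ?_, ?_⟩
    · rw [Finset.mem_range]
      have hbt : b * t ≤ ρ - i - 1 := by omega
      have hble : b ≤ (ρ - i - 1) / t := Nat.le_div_iff_mul_le ht |>.mpr hbt
      omega
    · omega
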